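/- arXiv:1506.03913 — 4 statements merged into one kernel-verified Lean document; each statement's English description precedes it below -/
import Mathlib

section
/- Let G be a complete multipartite graph. In any (q,2)-tree-coloring of G, every color class of size at least 4 is an independent set of G. -/
open SimpleGraph

noncomputable section

/-- `f` is a `(q,2)`-tree-coloring of `G`: the subgraph induced by each color class
is a forest (acyclic) in which every vertex has at most `2` neighbours inside its class. -/
def IsTreeColoring2 {V : Type*} (G : SimpleGraph V) (q : ℕ) (f : V → Fin q) : Prop :=
  (∀ c : Fin q, (G.induce (f ⁻¹' {c})).IsAcyclic) ∧
    ∀ v : V, Set.ncard {w : V | G.Adj v w ∧ f w = f v} ≤ 2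

/-- The coloring `f` is equitable: any two color classes differ in size by at most one. -/
def IsEquitableColoring {V : Type*} (q : ℕ) (f : V → Fin q) : Prop :=
  ∀ c₁ c₂ : Fin q, Set.ncard (f ⁻¹' {c₁}) ≤ Set.ncard (f ⁻¹' {c₂}) + 1

/-- `G` has an equitable `(q,2)`-tree-coloring. -/
def HasEquitableTreeColoring2 {V : Type*} (G : SimpleGraph V) (q : ℕ) : Prop :=
  ∃ f : V → Fin q, IsTreeColoring2 G q f ∧ IsEquitableColoring q f

/-- `G` has a proper equitable `q`-coloring. -/
def HasProperEquitableColoring {V : Type*} (G : SimpleGraph V) (q : ℕ) : Prop :=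
  ∃ f : V → Fin q, (∀ v w : V, G.Adj v w → f v ≠ f w) ∧ IsEquitableColoring q f

/-- The strong equitable vertex 2-arboricity `va≡₂(G)`: the minimum `p` such that `G`
has an equitable `(q,2)`-tree-coloring for every `q ≥ p`. -/
def va2 {V : Type*} (G : SimpleGraph V) : ℕ :=
  sInf {p : ℕ | ∀ q : ℕ, p ≤ q → HasEquitableTreeColoring2 G q}

/-- The parameter `d` from the definition of `p(q : n₁, …, n_k)`: the minimum value
greater than `⌊(n₁+⋯+n_k)/q⌋` such that (i) some two distinct `nᵢ, nⱼ` are not divisible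
by `d`, or (ii) some `nⱼ` has `nⱼ/⌊nⱼ/d⌋ > d+1`. -/
def dVal {ι : Type*} [Fintype ι] (q : ℕ) (ns : ι → ℕ) : ℕ :=
  sInf {d : ℕ |
    (∑ i, ns i) / q < d ∧
      ((∃ i j : ι, i ≠ j ∧ ¬ d ∣ ns i ∧ ¬ d ∣ ns j) ∨
        ∃ j : ι, ((d : ℚ) + 1) < (ns j : ℚ) / ((ns j / d : ℕ) : ℚ))}

/-- `p(q : n₁, …, n_k) = ⌈n₁/d⌉ + ⋯ + ⌈n_k/d⌉` where `d = dVal q ns`. -/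
def pVal {ι : Type*} [Fintype ι] (q : ℕ) (ns : ι → ℕ) : ℕ :=
  ∑ i, ⌈(ns i : ℚ) / (dVal q ns : ℚ)⌉₊

/-- The part of a vertex of the complete tripartite graph. -/
def triPart {l m n : ℕ} : Fin l ⊕ Fin m ⊕ Fin n → Fin 3
  | Sum.inl _ => 0
  | Sum.inr (Sum.inl _) => 1
  | Sum.inr (Sum.inr _) => 2

/-- The complete tripartite graph `K_{l,m,n}`. -/
def completeTripartiteGraph (l m n : ℕ) : SimpleGraph (Fin l ⊕ Fin m ⊕ Fin n) where
  Adj v w := triPart v ≠ triPart w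
  symm := ⟨fun _ _ h => Ne.symm h⟩
  loopless := ⟨fun _ h => h rfl⟩

/-- Condition A for a triple `(l,m,n)`. -/
def ConditionA (l m n : ℕ) : Prop :=
  ∃ j h k : ℕ, 0 < j ∧ 0 < h ∧ 0 < k ∧
    ((l, m, n) = (4 * j, 4 * h, 4 * k - 1) ∨
     (l, m, n) = (4 * j, 4 * h - 1, 4 * k) ∨
     (l, m, n) = (4 * j - 1, 4 * h, 4 * k) ∨
     (l, m, n) = (4 * j, 4 * h - 2, 4 * k - 3) ∨
     (l, m, n) = (4 * j, 4 * h - 3, 4 * k - 2) ∨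
     (l, m, n) = (4 * j - 2, 4 * h, 4 * k - 3) ∨
     (l, m, n) = (4 * j - 2, 4 * h - 3, 4 * k) ∨
     (l, m, n) = (4 * j - 3, 4 * h, 4 * k - 2) ∨
     (l, m, n) = (4 * j - 3, 4 * h - 2, 4 * k))

/-- Condition B for a triple `(l,m,n)`. -/
def ConditionB (l m n : ℕ) : Prop :=
  ∃ j h k : ℕ, 0 < j ∧ 0 < h ∧ 0 < k ∧
    ((l, m, n) = (4 * (j + 2) + 3, 4 * h, 4 * k) ∨
     (l, m, n) = (4 * j, 4 * (h + 2) + 3, 4 * k) ∨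
     (l, m, n) = (4 * j, 4 * h, 4 * (k + 2) + 3) ∨
     (l, m, n) = (4 * (j + 1) + 2, 4 * h + 1, 4 * k) ∨
     (l, m, n) = (4 * (j + 1) + 2, 4 * h, 4 * k + 1) ∨
     (l, m, n) = (4 * j + 1, 4 * (h + 1) + 2, 4 * k) ∨
     (l, m, n) = (4 * j + 1, 4 * h, 4 * (k + 1) + 2) ∨
     (l, m, n) = (4 * j, 4 * (h + 1) + 2, 4 * k + 1) ∨
     (l, m, n) = (4 * j, 4 * h + 1, 4 * (k + 1) + 2) ∨
     (l, m, n) = (4 * j + 1, 4 * h + 1, 4 * k + 1))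

/-!
A colour class `S` induces a complete multipartite forest of maximum degree at most 2. If it has
an edge `uv`, a vertex `x ≠ u` not adjacent to `u` and a vertex `y ≠ v` not adjacent to `v` cannot
both exist: non-adjacency is transitive, so `v x y u` would close a 4-cycle through `uv`. Hence one
endpoint of the edge is adjacent to every other vertex of `S`, and the degree bound gives `|S| ≤ 3`.
-/

namespace SimpleGraph

variable {α : Type*} {G : SimpleGraph α}

lemma IsAcyclic.not_adj_of_adj_of_adj_of_adj (hG : G.IsAcyclic) {a b c d : α}
    (hab : G.Adj a b) (hbc : G.Adj b c) (hcd : G.Adj c d) (hac : a ≠ c) (hbd : b ≠ d) :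
    ¬ G.Adj d a := fun hda ↦ hG (.cons hab (.cons hbc (.cons hcd (.cons hda .nil)))) <| by
  simp [Walk.isCycle_def, Walk.isTrail_def, hab.ne, hbc.ne, hcd.ne, hda.ne, hab.ne', hda.ne', hac,
    hbd, hac.symm]

lemma IsCompleteMultipartite.adj_or_adj_of_adj (hG : G.IsCompleteMultipartite) {u v : α}
    (huv : G.Adj u v) (w : α) : G.Adj u w ∨ G.Adj v w := by
  by_contra! h
  exact hG.trans u w v h.1 (fun hwv ↦ h.2 hwv.symm) huv

lemma IsCompleteMultipartite.exists_forall_adj_of_isAcyclic (hG : G.IsCompleteMultipartite)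
    (hacyc : G.IsAcyclic) {u v : α} (huv : G.Adj u v) :
    (∀ w ≠ u, G.Adj u w) ∨ ∀ w ≠ v, G.Adj v w := by
  by_contra! h
  obtain ⟨⟨x, hxu, hux⟩, ⟨y, hyv, hvy⟩⟩ := h
  have hvx : G.Adj v x := (hG.adj_or_adj_of_adj huv x).resolve_left hux
  have huy : G.Adj u y := (hG.adj_or_adj_of_adj huv y).resolve_right hvy
  have hxy : G.Adj x y := by
    by_contra hxy
    exact hG.trans u x y hux hxy huy
  exact hacyc.not_adj_of_adj_of_adj_of_adj huv hvx hxy hxu.symm hyv.symm huy.symm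

lemma IsCompleteMultipartite.card_le_three_of_isAcyclic [Finite α]
    (hG : G.IsCompleteMultipartite) (hacyc : G.IsAcyclic)
    (hdeg : ∀ v, (G.neighborSet v).ncard ≤ 2) {u v : α} (huv : G.Adj u v) :
    Nat.card α ≤ 3 := by
  have card_le {z : α} (hz : ∀ w ≠ z, G.Adj z w) : Nat.card α ≤ 3 := by
    have hsub : Set.univ ⊆ insert z (G.neighborSet z) := fun w _ ↦ (eq_or_ne w z).imp id (hz w)
    calc Nat.card α = (Set.univ : Set α).ncard := (Set.ncard_univ α).symm
      _ ≤ (insert z (G.neighborSet z)).ncard := Set.ncard_le_ncard hsub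
      _ ≤ (G.neighborSet z).ncard + 1 := Set.ncard_insert_le _ _
      _ ≤ 3 := by have := hdeg z; omega
  rcases hG.exists_forall_adj_of_isAcyclic hacyc huv with hu | hv
  · exact card_le hu
  · exact card_le hv

lemma ncard_neighborSet_induce_le {s : Set α} (hs : s.Finite) (v : s) :
    ((G.induce s).neighborSet v).ncard ≤ (G.neighborSet v ∩ s).ncard := by
  rw [← Set.ncard_image_of_injective _ Subtype.val_injective]
  refine Set.ncard_le_ncard ?_ (hs.inter_of_right _)
  rintro _ ⟨w, hw, rfl⟩
  exact ⟨hw, w.2⟩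

end SimpleGraph

theorem statement0_general {ι : Type*} (V : ι → Type*)
    (q : ℕ) (f : (Σ i, V i) → Fin q)
    (hf : IsTreeColoring2 (completeMultipartiteGraph V) q f)
    (c : Fin q) (hc : 4 ≤ Set.ncard (f ⁻¹' {c})) :
    ∀ v w : Σ i, V i, f v = c → f w = c →
      ¬ (completeMultipartiteGraph V).Adj v w := by
  intro v w hv hw hvw
  set G := completeMultipartiteGraph V
  set S := f ⁻¹' {c}
  have hS : S.Finite := Set.finite_of_ncard_pos (by omega)
  have : Finite S := hS
  have hdeg (x : S) : ((G.induce S).neighborSet x).ncard ≤ 2 := by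
    have hx : f x = c := x.2
    have hclass : G.neighborSet x ∩ S = {y | G.Adj x y ∧ f y = f x} := by
      ext y
      simp [S, hx]
    exact (G.ncard_neighborSet_induce_le hS x).trans (hclass ▸ hf.2 x)
  have hcard : Nat.card S ≤ 3 :=
    (completeMultipartiteGraph.isCompleteMultipartite V).induce.card_le_three_of_isAcyclic
      (hf.1 c) hdeg (u := ⟨v, hv⟩) (v := ⟨w, hw⟩) hvw
  rw [Nat.card_coe_set_eq] at hcard
  omega

theorem statement0 {ι : Type*} [Fintype ι] (V : ι → Type*) [∀ i, Fintype (V i)]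
    (q : ℕ) (f : (Σ i, V i) → Fin q)
    (hf : IsTreeColoring2 (completeMultipartiteGraph V) q f)
    (c : Fin q) (hc : 4 ≤ Set.ncard (f ⁻¹' {c})) :
    ∀ v w : Σ i, V i, f v = c → f w = c →
      ¬ (completeMultipartiteGraph V).Adj v w :=
  statement0_general V q f hf c hc
end
end

section
/- Let G be a complete multipartite graph with n vertices and let q be a positive integer with n/q ≥ 4 (equivalently n ≥ 4q). Then every equitable (q,2)-tree-coloring of G is a proper equitable q-coloring of G, i.e., every color class is an independent set and the sizes of any two color classes differ by at most one. -/
open SimpleGraph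

noncomputable section

/-!
Each colour class has at least four vertices, since the classes differ in size by at most one
and together cover at least `4q` vertices. A vertex `v` sees every vertex of its class outside
its own part, so with at most two such neighbours its part contains another vertex `v'` of the
class. If `v` and `w` of the same class were adjacent, they would lie in different parts, and
`v, w, v', w'` would be a `4`-cycle inside the class.
-/

namespace SimpleGraph

theorem not_isAcyclic_of_cycle4 {α : Type*} {G : SimpleGraph α} {a b c d : α}
    (hab : G.Adj a b) (hbc : G.Adj b c) (hcd : G.Adj c d) (hda : G.Adj d a)
    (hac : a ≠ c) (hbd : b ≠ d) : ¬ G.IsAcyclic := fun hG =>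
  hG (.cons hab (.cons hbc (.cons hcd (.cons hda .nil)))) <| by
    have := hab.ne; have := hbc.ne; have := hcd.ne; have := hda.ne
    rw [Walk.cons_isCycle_iff]
    constructor
    · simp_all [Walk.cons_isPath_iff, eq_comm]
    · simp_all [Sym2.eq, Sym2.rel_iff', eq_comm]

end SimpleGraph

theorem sum_ncard_preimage_singleton {α β : Type*} [Fintype α] [Fintype β] (f : α → β) :
    ∑ b, (f ⁻¹' {b}).ncard = Fintype.card α := by
  classical
  rw [← Finset.card_univ, Finset.card_eq_sum_card_fiberwise (fun x _ => Finset.mem_univ (f x))]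
  refine Finset.sum_congr rfl fun b _ => ?_
  rw [← Set.ncard_coe_finset]
  congr 1
  ext
  simp

theorem IsEquitableColoring.le_ncard_preimage {α : Type*} [Fintype α] {q k : ℕ} {f : α → Fin q}
    (he : IsEquitableColoring q f) (hk : k * q ≤ Fintype.card α) (c : Fin q) :
    k ≤ (f ⁻¹' {c}).ncard := by
  by_contra! hc
  have hlt : ∑ c', (f ⁻¹' {c'}).ncard < ∑ _c' : Fin q, k :=
    Finset.sum_lt_sum (fun c' _ => by have := he c' c; omega) ⟨c, Finset.mem_univ c, hc⟩
  simp only [sum_ncard_preimage_singleton, Finset.sum_const, Finset.card_univ, Fintype.card_fin,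
    smul_eq_mul] at hlt
  linarith

section CompleteMultipartite

variable {ι : Type*} {V : ι → Type*} {q : ℕ}

theorem exists_ne_fst_eq_of_ncard_adj_le_two {f : (Σ i, V i) → Fin q} (v : Σ i, V i)
    (hdeg : {w | (completeMultipartiteGraph V).Adj v w ∧ f w = f v}.ncard ≤ 2)
    (hclass : 4 ≤ (f ⁻¹' {f v}).ncard) :
    ∃ v', v' ≠ v ∧ v'.1 = v.1 ∧ f v' = f v := by
  set T := {w ∈ f ⁻¹' {f v} | w.1 = v.1}
  have hcover : f ⁻¹' {f v} = {w | (completeMultipartiteGraph V).Adj v w ∧ f w = f v} ∪ T := by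
    ext w
    by_cases h : w.1 = v.1
    · simp [T, h]
    · simp [T, h, completeMultipartiteGraph, Ne.symm h]
  have hT : 1 < T.ncard := by
    have := Set.ncard_union_le {w | (completeMultipartiteGraph V).Adj v w ∧ f w = f v} T
    rw [← hcover] at this
    omega
  obtain ⟨v', ⟨hfv', hv'⟩, hne⟩ := Set.exists_ne_of_one_lt_ncard hT v
  exact ⟨v', hne, hv', hfv'⟩

theorem not_isAcyclic_induce_completeMultipartiteGraph {S : Set (Σ i, V i)}
    {v v' w w' : Σ i, V i} (hv : v ∈ S) (hv' : v' ∈ S) (hw : w ∈ S) (hw' : w' ∈ S)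
    (hvv' : v' ≠ v) (hww' : w' ≠ w) (hfst : v'.1 = v.1) (hfst' : w'.1 = w.1) (hvw : v.1 ≠ w.1) :
    ¬ ((completeMultipartiteGraph V).induce S).IsAcyclic :=
  not_isAcyclic_of_cycle4 (a := ⟨v, hv⟩) (b := ⟨w, hw⟩) (c := ⟨v', hv'⟩) (d := ⟨w', hw'⟩)
    (show v.1 ≠ w.1 from hvw) (show w.1 ≠ v'.1 by grind) (show v'.1 ≠ w'.1 by grind)
    (show w'.1 ≠ v.1 by grind) (by simpa [Subtype.ext_iff] using hvv'.symm)
    (by simpa [Subtype.ext_iff] using hww'.symm)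

end CompleteMultipartite

theorem statement1_general {ι : Type*} [Fintype ι] (V : ι → Type*) [∀ i, Fintype (V i)]
    (q : ℕ) (hn : 4 * q ≤ Fintype.card (Σ i, V i))
    (f : (Σ i, V i) → Fin q)
    (hf : IsTreeColoring2 (completeMultipartiteGraph V) q f)
    (he : IsEquitableColoring q f) :
    (∀ c : Fin q, ∀ v w : Σ i, V i, f v = c → f w = c →
      ¬ (completeMultipartiteGraph V).Adj v w) ∧ IsEquitableColoring q f := by
  refine ⟨?_, he⟩
  rintro c v w rfl hw hvw
  have hclass : 4 ≤ (f ⁻¹' {f v}).ncard := he.le_ncard_preimage hn (f v)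
  obtain ⟨v', hv'v, hv'₁, hv'c⟩ := exists_ne_fst_eq_of_ncard_adj_le_two v (hf.2 v) hclass
  obtain ⟨w', hw'w, hw'₁, hw'c⟩ := exists_ne_fst_eq_of_ncard_adj_le_two w (hf.2 w) (hw ▸ hclass)
  exact not_isAcyclic_induce_completeMultipartiteGraph (S := f ⁻¹' {f v}) rfl hv'c hw
    (hw'c.trans hw) hv'v hw'w hv'₁ hw'₁ hvw (hf.1 (f v))

theorem statement1 {ι : Type*} [Fintype ι] (V : ι → Type*) [∀ i, Fintype (V i)]
    (q : ℕ) (hq : 0 < q) (hn : 4 * q ≤ Fintype.card (Σ i, V i))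
    (f : (Σ i, V i) → Fin q)
    (hf : IsTreeColoring2 (completeMultipartiteGraph V) q f)
    (he : IsEquitableColoring q f) :
    (∀ c : Fin q, ∀ v w : Σ i, V i, f v = c → f w = c →
      ¬ (completeMultipartiteGraph V).Adj v w) ∧ IsEquitableColoring q f :=
  statement1_general V q hn f hf he
end
end

section
/- Let m and n be positive integers with m + n = 4b + c, where b is a nonnegative integer and 0 ≤ c ≤ 3. Then the complete bipartite graph K_{m,n} has an equitable (t,2)-tree-coloring for every t ≥ b + 1. -/
/-!
As `t ≥ b + 1`, we have `m + n = q t + r` with `q ≤ 3` and `r < t`, so an equitable partition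
into `t` classes has `r` classes of size `q + 1` and `t - r` of size `q`. A class meeting the two
sides in `a` and `b` vertices induces `K_{a,b}`, which is a forest of maximum degree at most `2`
whenever `a + b ≤ 3` or `min a b = 0`. So it suffices to put every class of size `q + 1` inside one
side, taking `min r ⌊m / (q + 1)⌋` of them on the left, and to split the remaining vertices among
the classes of size `q` arbitrarily.
-/

open SimpleGraph

noncomputable section

/-- `K_{a,b}` is a forest of maximum degree at most `2` exactly when this holds. -/
def IsLinearForestShape (a b : ℕ) : Prop :=
  min a b = 0 ∨ (min a b = 1 ∧ max a b ≤ 2)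

lemma SimpleGraph.IsVertexCover.isAcyclic_of_subsingleton {V : Type*} {G : SimpleGraph V}
    {S : Set V} (hG : G.IsVertexCover S) (hS : S.Subsingleton) : G.IsAcyclic := by
  rcases hS.eq_empty_or_singleton with rfl | ⟨r, rfl⟩
  · exact isAcyclic_bot.anti fun u v huv => by simpa using hG huv
  · exact (isAcyclic_starGraph r).anti fun u v huv => starGraph_adj.2 ⟨huv.ne, hG huv⟩

lemma isAcyclic_induce_completeBipartiteGraph {α β : Type*} {s : Set (α ⊕ β)}
    (h : (Sum.inl ⁻¹' s).Subsingleton ∨ (Sum.inr ⁻¹' s).Subsingleton) :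
    ((completeBipartiteGraph α β).induce s).IsAcyclic := by
  rcases h with h | h
  · refine IsVertexCover.isAcyclic_of_subsingleton (S := {v | v.1.isLeft}) ?_ ?_
    · rintro ⟨_ | _, _⟩ ⟨_ | _, _⟩ <;> simp
    · rintro ⟨v, hv⟩ hl ⟨w, hw⟩ hl'
      obtain ⟨i, rfl⟩ := Sum.isLeft_iff.1 hl
      obtain ⟨j, rfl⟩ := Sum.isLeft_iff.1 hl'
      simp [h hv hw]
  · refine IsVertexCover.isAcyclic_of_subsingleton (S := {v | v.1.isRight}) ?_ ?_
    · rintro ⟨_ | _, _⟩ ⟨_ | _, _⟩ <;> simp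
    · rintro ⟨v, hv⟩ hr ⟨w, hw⟩ hr'
      obtain ⟨i, rfl⟩ := Sum.isRight_iff.1 hr
      obtain ⟨j, rfl⟩ := Sum.isRight_iff.1 hr'
      simp [h hv hw]

lemma Set.ncard_eq_ncard_preimage_inl_add_ncard_preimage_inr {α β : Type*} [Finite α]
    [Finite β] (s : Set (α ⊕ β)) : s.ncard = (Sum.inl ⁻¹' s).ncard + (Sum.inr ⁻¹' s).ncard := by
  conv_lhs => rw [← image_preimage_inl_union_image_preimage_inr s]
  rw [ncard_union_eq disjoint_image_inl_image_inr, ncard_image_of_injective _ Sum.inl_injective,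
    ncard_image_of_injective _ Sum.inr_injective]

open Set in
theorem isTreeColoring2_completeBipartiteGraph {α β : Type*} [Finite α] [Finite β] {q : ℕ}
    (f : α ⊕ β → Fin q)
    (hshape : ∀ c, IsLinearForestShape (Sum.inl ⁻¹' (f ⁻¹' {c})).ncard
      (Sum.inr ⁻¹' (f ⁻¹' {c})).ncard) :
    IsTreeColoring2 (completeBipartiteGraph α β) q f := by
  refine ⟨fun c => isAcyclic_induce_completeBipartiteGraph ?_, ?_⟩
  · have h := hshape c
    unfold IsLinearForestShape at h
    rcases (by omega : (Sum.inl ⁻¹' (f ⁻¹' {c})).ncard ≤ 1 ∨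
      (Sum.inr ⁻¹' (f ⁻¹' {c})).ncard ≤ 1) with h | h
    exacts [.inl (ncard_le_one_iff_subsingleton.1 h), .inr (ncard_le_one_iff_subsingleton.1 h)]
  · rintro (i | j)
    · have hnbrs : {w | (completeBipartiteGraph α β).Adj (.inl i) w ∧ f w = f (.inl i)} =
          .inr '' (Sum.inr ⁻¹' (f ⁻¹' {f (.inl i)})) := by
        ext (_ | _) <;> simp
      have hpos : 0 < (Sum.inl ⁻¹' (f ⁻¹' {f (.inl i)})).ncard := (ncard_pos).2 ⟨i, rfl⟩
      have h := hshape (f (.inl i))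
      unfold IsLinearForestShape at h
      rw [hnbrs, ncard_image_of_injective _ Sum.inr_injective]
      omega
    · have hnbrs : {w | (completeBipartiteGraph α β).Adj (.inr j) w ∧ f w = f (.inr j)} =
          .inl '' (Sum.inl ⁻¹' (f ⁻¹' {f (.inr j)})) := by
        ext (_ | _) <;> simp
      have hpos : 0 < (Sum.inr ⁻¹' (f ⁻¹' {f (.inr j)})).ncard := (ncard_pos).2 ⟨j, rfl⟩
      have h := hshape (f (.inr j))
      unfold IsLinearForestShape at h
      rw [hnbrs, ncard_image_of_injective _ Sum.inl_injective]
      omega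

lemma ncard_fst_finSigmaFinEquiv_symm_eq {q : ℕ} (a : Fin q → ℕ) (c : Fin q) :
    {i : Fin (∑ c, a c) | (finSigmaFinEquiv.symm i).1 = c}.ncard = a c := by
  change (finSigmaFinEquiv.symm ⁻¹' (Sigma.fst ⁻¹' {c})).ncard = a c
  rw [← Set.range_sigmaMk,
    Set.ncard_preimage_of_injective_subset_range finSigmaFinEquiv.symm.injective (by simp),
    Set.ncard_range_of_injective sigma_mk_injective, Nat.card_eq_fintype_card, Fintype.card_fin]

theorem hasEquitableTreeColoring2_completeBipartiteGraph_of_parts {q k : ℕ} (a b : Fin q → ℕ)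
    (hshape : ∀ c, IsLinearForestShape (a c) (b c))
    (hsize : ∀ c, k ≤ a c + b c ∧ a c + b c ≤ k + 1) :
    HasEquitableTreeColoring2 (completeBipartiteGraph (Fin (∑ c, a c)) (Fin (∑ c, b c))) q := by
  let f : Fin (∑ c, a c) ⊕ Fin (∑ c, b c) → Fin q :=
    Sum.elim (fun i => (finSigmaFinEquiv.symm i).1) (fun j => (finSigmaFinEquiv.symm j).1)
  have hleft (c : Fin q) : (Sum.inl ⁻¹' (f ⁻¹' {c})).ncard = a c :=
    ncard_fst_finSigmaFinEquiv_symm_eq a c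
  have hright (c : Fin q) : (Sum.inr ⁻¹' (f ⁻¹' {c})).ncard = b c :=
    ncard_fst_finSigmaFinEquiv_symm_eq b c
  refine ⟨f, isTreeColoring2_completeBipartiteGraph f fun c => ?_, fun c c' => ?_⟩
  · rw [hleft, hright]
    exact hshape c
  · rw [Set.ncard_eq_ncard_preimage_inl_add_ncard_preimage_inr,
      Set.ncard_eq_ncard_preimage_inl_add_ncard_preimage_inr (f ⁻¹' {c'}),
      hleft, hright, hleft, hright]
    have := hsize c
    have := hsize c'
    omega

theorem hasEquitableTreeColoring2_completeBipartiteGraph_of_list {k : ℕ} (l : List (ℕ × ℕ))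
    (hshape : ∀ p ∈ l, IsLinearForestShape p.1 p.2)
    (hsize : ∀ p ∈ l, k ≤ p.1 + p.2 ∧ p.1 + p.2 ≤ k + 1) :
    HasEquitableTreeColoring2
      (completeBipartiteGraph (Fin (l.map Prod.fst).sum) (Fin (l.map Prod.snd).sum)) l.length := by
  have key := hasEquitableTreeColoring2_completeBipartiteGraph_of_parts (fun c => (l.get c).1)
    (fun c => (l.get c).2) (fun c => hshape _ (l.get_mem c)) (fun c => hsize _ (l.get_mem c))
  have hfst : List.ofFn (fun c => (l.get c).1) = l.map Prod.fst := by simp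
  have hsnd : List.ofFn (fun c => (l.get c).2) = l.map Prod.snd := by simp
  rwa [← List.sum_ofFn, ← List.sum_ofFn, hfst, hsnd] at key

lemma List.exists_split_with_sum_fst_eq {s : ℕ} : ∀ sizes : List ℕ, s ≤ sizes.sum →
    ∃ l : List (ℕ × ℕ), l.map (fun p => p.1 + p.2) = sizes ∧ (l.map Prod.fst).sum = s
  | [], hs => ⟨[], rfl, by simp only [sum_nil, nonpos_iff_eq_zero] at hs; simp [hs]⟩
  | k :: sizes, hs => by
    obtain ⟨l, hl, hsum⟩ := exists_split_with_sum_fst_eq (s := s - min s k) sizes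
      (by simp only [sum_cons] at hs; omega)
    exact ⟨(min s k, k - min s k) :: l, by simp [hl], by simp [hsum]⟩

lemma exists_linearForestShapes_of_eq_mul_add {m n q r t : ℕ} (hq : q ≤ 3) (hr : r < t)
    (hN : m + n = q * t + r) :
    ∃ l : List (ℕ × ℕ), l.length = t ∧
      (∀ p ∈ l, IsLinearForestShape p.1 p.2 ∧ q ≤ p.1 + p.2 ∧ p.1 + p.2 ≤ q + 1) ∧
      (l.map Prod.fst).sum = m ∧ (l.map Prod.snd).sum = n := by
  obtain ⟨x, hxr, hxm, hrest⟩ : ∃ x, x ≤ r ∧ x * (q + 1) ≤ m ∧ m - x * (q + 1) ≤ (t - r) * q :=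
    ⟨min r (m / (q + 1)), min_le_left _ _, by interval_cases q <;> omega,
      by interval_cases q <;> omega⟩
  obtain ⟨mid, hmid, hmid_fst⟩ := List.exists_split_with_sum_fst_eq (s := m - x * (q + 1))
    (List.replicate (t - r) q)
    (by simp only [List.sum_replicate, smul_eq_mul, tsub_le_iff_right]; omega)
  have hmid_snd : (mid.map Prod.snd).sum = (t - r) * q - (m - x * (q + 1)) := by
    have := congrArg List.sum hmid
    simp only [List.sum_map_add, List.sum_replicate, smul_eq_mul, hmid_fst] at this
    omega
  refine ⟨List.replicate x (q + 1, 0) ++ mid ++ List.replicate (r - x) (0, q + 1), ?_, ?_, ?_, ?_⟩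
  · have := congrArg List.length hmid
    simp only [List.length_map, List.length_replicate, List.length_append] at this ⊢
    omega
  · simp only [List.mem_append, List.mem_replicate]
    rintro p ((⟨-, rfl⟩ | hp) | ⟨-, rfl⟩)
    · simp [IsLinearForestShape]
    · have : p.1 + p.2 = q := by
        have := hmid ▸ List.mem_map_of_mem (f := fun p : ℕ × ℕ => p.1 + p.2) hp
        simpa using List.eq_of_mem_replicate this
      unfold IsLinearForestShape
      omega
    · simp [IsLinearForestShape]
  · simp only [List.map_append, List.map_replicate, List.sum_append, List.sum_replicate,
      smul_eq_mul, hmid_fst]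
    omega
  · simp only [List.map_append, List.map_replicate, List.sum_append, List.sum_replicate,
      hmid_snd, smul_eq_mul]
    interval_cases q <;> omega

theorem statement3_general (m n b c : ℕ) (hc : c ≤ 3)
    (hsum : m + n = 4 * b + c) :
    ∀ t : ℕ, b + 1 ≤ t →
      HasEquitableTreeColoring2 (completeBipartiteGraph (Fin m) (Fin n)) t := by
  intro t ht
  have hq : (m + n) / t ≤ 3 := Nat.lt_succ_iff.1 (Nat.div_lt_of_lt_mul (by omega))
  obtain ⟨l, rfl, hl, rfl, rfl⟩ := exists_linearForestShapes_of_eq_mul_add hq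
    (Nat.mod_lt _ (by omega)) (Nat.div_add_mod' (m + n) t).symm
  exact hasEquitableTreeColoring2_completeBipartiteGraph_of_list l (fun p hp => (hl p hp).1)
    fun p hp => (hl p hp).2

theorem statement3 (m n b c : ℕ) (hm : 0 < m) (hn : 0 < n) (hc : c ≤ 3)
    (hsum : m + n = 4 * b + c) :
    ∀ t : ℕ, b + 1 ≤ t →
      HasEquitableTreeColoring2 (completeBipartiteGraph (Fin m) (Fin n)) t :=
  statement3_general m n b c hc hsum
end
end

section
/- Let l ≤ m ≤ n be positive integers with l + m + n = 4b + c, where b is a positive integer and 0 ≤ c ≤ 2. Then the complete tripartite graph K_{l,m,n} has an equitable (t,2)-tree-coloring for every t ≥ b + 1. -/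
open SimpleGraph

noncomputable section

/-!
With `N = l + m + n ≤ 4t - 2` vertices, an equitable partition into `t` classes has classes of
sizes `k` and `k + 1 ≤ 4`. List the vertices part by part with the part of size `n ≥ 2` in the
middle, and colour consecutive blocks. At most three consecutive vertices cannot meet both outer
parts, so such a block induces a triangle-free graph on at most three vertices: a linear forest.
Blocks of size `4` occur only when `k = 3`, and then there are at least two blocks of size `3`,
which can be put over the two boundaries between parts; so every block of size `4` lies inside a
part and is independent.
-/

namespace SimpleGraph

variable {V : Type*} {G : SimpleGraph V}

lemma isAcyclic_of_forall_not_adj (h : ∀ v w, ¬ G.Adj v w) : G.IsAcyclic :=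
  isAcyclic_bot.anti fun v w hvw => (h v w hvw).elim

lemma isAcyclic_of_card_le_three [Finite V] (hV : Nat.card V ≤ 3)
    (htri : ∀ u v w, G.Adj u v → G.Adj v w → ¬ G.Adj u w) : G.IsAcyclic := by
  intro u c hc
  have := Fintype.ofFinite V
  have hlen : c.length = 3 := by
    have := hc.support_nodup.length_le_card
    have := hc.three_le_length
    simp only [List.length_tail, Walk.length_support, Nat.card_eq_fintype_card] at *
    omega
  have hlast : c.getVert 3 = u := hlen ▸ c.getVert_length
  have h01 := c.adj_getVert_succ (i := 0) (by omega)
  have h12 := c.adj_getVert_succ (i := 1) (by omega)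
  have h23 := c.adj_getVert_succ (i := 2) (by omega)
  rw [c.getVert_zero] at h01
  rw [hlast] at h23
  exact htri _ _ _ h01 h12 h23.symm

end SimpleGraph

lemma isTreeColoring2_of_forall_class {V : Type*} [Finite V] {G : SimpleGraph V} {q : ℕ}
    (f : V → Fin q)
    (h : ∀ c, G.IsIndepSet (f ⁻¹' {c}) ∨ ((f ⁻¹' {c}).ncard ≤ 3 ∧
      ∀ u ∈ f ⁻¹' {c}, ∀ v ∈ f ⁻¹' {c}, ∀ w ∈ f ⁻¹' {c}, G.Adj u v → G.Adj v w → ¬ G.Adj u w)) :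
    IsTreeColoring2 G q f := by
  have hadj : ∀ c, G.IsIndepSet (f ⁻¹' {c}) → ∀ v ∈ f ⁻¹' {c}, ∀ w ∈ f ⁻¹' {c}, ¬ G.Adj v w :=
    fun c hc v hv w hw hvw => hc hv hw (G.ne_of_adj hvw) hvw
  refine ⟨fun c => ?_, fun v => ?_⟩
  · rcases h c with hind | ⟨hcard, htri⟩
    · exact isAcyclic_of_forall_not_adj fun v w => hadj c hind v.1 v.2 w.1 w.2
    · refine isAcyclic_of_card_le_three ?_ fun u v w => htri u.1 u.2 v.1 v.2 w.1 w.2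
      rwa [Nat.card_coe_set_eq]
  · rcases h (f v) with hind | ⟨hcard, -⟩
    · have : {w | G.Adj v w ∧ f w = f v} = ∅ :=
        Set.eq_empty_of_forall_notMem fun w hw => hadj _ hind v rfl w hw.2 hw.1
      simp [this]
    · have hsub : {w | G.Adj v w ∧ f w = f v} ⊆ f ⁻¹' {f v} \ {v} :=
        fun w hw => ⟨hw.2, fun hwv => G.irrefl (hwv ▸ hw.1)⟩
      calc _ ≤ (f ⁻¹' {f v} \ {v}).ncard := Set.ncard_le_ncard hsub
        _ = (f ⁻¹' {f v}).ncard - 1 := Set.ncard_sdiff_singleton_of_mem rfl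
        _ ≤ 2 := by omega

/-- `blockIndex L p` is the index of the block containing `p` when `ℕ` is cut into consecutive
blocks of the sizes listed in `L`. -/
def blockIndex : List ℕ → ℕ → ℕ
  | [], _ => 0
  | a :: L, p => if p < a then 0 else blockIndex L (p - a) + 1

lemma blockIndex_eq_iff : ∀ {L : List ℕ} {p : ℕ} (i : ℕ), p < L.sum →
    (blockIndex L p = i ↔ (L.take i).sum ≤ p ∧ p < (L.take (i + 1)).sum)
  | [], p, _, hp => by simp at hp
  | a :: L, p, 0, _ => by simp [blockIndex]
  | a :: L, p, i + 1, hp => by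
    rw [List.sum_cons] at hp
    by_cases hpa : p < a
    · simp [blockIndex, hpa]
      omega
    · simp only [blockIndex, hpa, if_false, List.take_succ_cons, List.sum_cons,
        Nat.add_right_cancel_iff, blockIndex_eq_iff i (by omega : p - a < L.sum)]
      omega

lemma blockIndex_lt_length {L : List ℕ} {p : ℕ} (hp : p < L.sum) : blockIndex L p < L.length := by
  by_contra! h
  have := ((blockIndex_eq_iff _ hp).1 rfl).1
  rw [List.take_of_length_le h] at this
  omega

section IntervalColoring

variable {V : Type*} {N : ℕ} (pos : V ≃ Fin N) (L : List ℕ) (hL : L.sum = N)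

def intervalColoring : V → Fin L.length :=
  fun v => ⟨blockIndex L (pos v), blockIndex_lt_length (hL ▸ (pos v).2)⟩

lemma mem_preimage_intervalColoring {v : V} {c : Fin L.length} :
    v ∈ intervalColoring pos L hL ⁻¹' {c} ↔
      (pos v : ℕ) ∈ Set.Ico (L.take c).sum (L.take (c + 1)).sum := by
  simp only [Set.mem_preimage, Set.mem_singleton_iff, Set.mem_Ico, intervalColoring, Fin.ext_iff]
  exact blockIndex_eq_iff _ (hL ▸ (pos v).2)

lemma ncard_preimage_intervalColoring (c : Fin L.length) :
    (intervalColoring pos L hL ⁻¹' {c}).ncard = L[(c : ℕ)] := by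
  have hpre : intervalColoring pos L hL ⁻¹' {c} =
      (Fin.val ∘ pos) ⁻¹' Set.Ico (L.take c).sum (L.take (c + 1)).sum := by
    ext v
    exact mem_preimage_intervalColoring pos L hL
  have hle : (L.take (c + 1)).sum ≤ N := hL ▸ List.Sublist.sum_le_sum (List.take_sublist _ _)
    (fun _ _ => Nat.zero_le _)
  rw [hpre, Set.ncard_preimage_of_injective_subset_range (Fin.val_injective.comp pos.injective),
    Set.ncard_Ico_nat, List.sum_take_succ _ _ c.2]
  · omega
  · rintro p ⟨-, hp⟩
    exact ⟨pos.symm ⟨p, by omega⟩, by simp⟩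

lemma isEquitableColoring_intervalColoring {k : ℕ} (hk : ∀ x ∈ L, x = k ∨ x = k + 1) :
    IsEquitableColoring L.length (intervalColoring pos L hL) := by
  intro c₁ c₂
  rw [ncard_preimage_intervalColoring, ncard_preimage_intervalColoring]
  have := hk _ (List.getElem_mem c₁.2 :)
  have := hk _ (List.getElem_mem c₂.2)
  omega

end IntervalColoring

open Finset in
/-- Greedily, a block of size `k + 1` is placed unless it would swallow a point of `C`; the block
of size `k` placed instead passes that point, so each point of `C` costs at most one block of
size `k`. -/
theorem exists_perm_replicate_avoiding (k : ℕ) (C : Finset ℕ) (r s p : ℕ)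
    (hC : #(C.filter (p < ·)) ≤ r) :
    ∃ L : List ℕ, L.Perm (List.replicate r k ++ List.replicate s (k + 1)) ∧
      ∀ i (hi : i < L.length), k < L[i] → ∀ x ∈ C,
        x ∉ Set.Ioo (p + (L.take i).sum) (p + (L.take (i + 1)).sum) := by
  induction hrs : r + s generalizing r s p with
  | zero =>
    obtain ⟨rfl, rfl⟩ : r = 0 ∧ s = 0 := by omega
    exact ⟨[], by simp, by simp⟩
  | succ n ih =>
    rcases s with _ | s
    · refine ⟨List.replicate r k, by simp, fun i hi hk => ?_⟩
      simp at hk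
    by_cases hfree : ∀ x ∈ C, x ∉ Set.Ioo p (p + (k + 1))
    · obtain ⟨L, hperm, hL⟩ := ih r s (p + (k + 1))
        (le_trans (card_le_card (monotone_filter_right _ fun x hx => by omega)) hC) (by omega)
      refine ⟨(k + 1) :: L, ?_, ?_⟩
      · rw [List.replicate_succ]
        exact (hperm.cons _).trans List.perm_middle.symm
      · rintro (_ | i) hi hk x hx
        · simpa using hfree x hx
        · simpa [add_assoc] using hL i (by simpa using hi) (by simpa using hk) x hx
    · push Not at hfree
      obtain ⟨x, hx, hxp, hxk⟩ := hfree
      have hlt : #(C.filter (p + k < ·)) < #(C.filter (p < ·)) := by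
        refine card_lt_card ⟨monotone_filter_right _ fun y hy => by omega, fun hsub => ?_⟩
        have := (mem_filter.1 (hsub (mem_filter.2 ⟨hx, hxp⟩))).2
        omega
      obtain ⟨r, rfl⟩ : ∃ r', r = r' + 1 := ⟨r - 1, by omega⟩
      obtain ⟨L, hperm, hL⟩ := ih r (s + 1) (p + k) (by omega) (by omega)
      refine ⟨k :: L, by simpa [List.replicate_succ] using hperm, ?_⟩
      rintro (_ | i) hi hk y hy
      · simp at hk
      · simpa [add_assoc] using hL i (by simpa using hi) (by simpa using hk) y hy

open Finset in
lemma exists_equitable_blockSizes (C : Finset ℕ) (hC : #C ≤ 2) (N t : ℕ) (ht : 0 < t)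
    (hN : N + 2 ≤ 4 * t) :
    ∃ L : List ℕ, L.length = t ∧ L.sum = N ∧ (∃ k, ∀ x ∈ L, x = k ∨ x = k + 1) ∧
      ∀ i (hi : i < L.length), 3 < L[i] → ∀ x ∈ C,
        x ∉ Set.Ioo (L.take i).sum (L.take (i + 1)).sum := by
  have hdiv := Nat.div_add_mod N t
  have hmod := Nat.mod_lt N ht
  have hk : N / t ≤ 3 := Nat.lt_succ_iff.1 ((Nat.div_lt_iff_lt_mul ht).2 (by omega))
  generalize N / t = q at *
  generalize N % t = s at *
  -- only blocks of size `4` must avoid `C`, and they occur only when `q = 3`, i.e. `s ≤ t - 2`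
  obtain ⟨L, hperm, hL⟩ := exists_perm_replicate_avoiding q (if q = 3 then C else ∅)
    (t - s) s 0 (by
      split_ifs with h3
      · have := card_filter_le C (0 < ·)
        subst h3
        omega
      · simp)
  have hmem : ∀ x ∈ L, x = q ∨ x = q + 1 := fun x hx => by
    rcases List.mem_append.1 (hperm.subset hx) with h | h
    · exact .inl (List.eq_of_mem_replicate h)
    · exact .inr (List.eq_of_mem_replicate h)
  refine ⟨L, ?_, ?_, ⟨q, hmem⟩, fun i hi h3 x hx => ?_⟩
  · simp [hperm.length_eq]
    omega
  · rw [hperm.sum_eq, ← hdiv]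
    simp only [List.sum_append, List.sum_replicate, smul_eq_mul]
    rw [Nat.mul_add, mul_one, ← add_assoc, ← Nat.add_mul, Nat.sub_add_cancel hmod.le, Nat.mul_comm]
  · have hLi := hmem _ (List.getElem_mem hi)
    simpa using hL i hi (by omega) x (by rw [if_pos (by omega)]; exact hx)

section Tripartite

variable (l m n : ℕ)

/-- The vertices of `K_{l,m,n}` ordered first part, third part, second part. -/
def tripartiteLayout : Fin l ⊕ Fin m ⊕ Fin n ≃ Fin (l + (n + m)) :=
  (Equiv.sumCongr (Equiv.refl _) ((Equiv.sumComm _ _).trans finSumFinEquiv)).trans finSumFinEquiv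

def tripartitePartAt (p : ℕ) : Fin 3 :=
  if p < l then 0 else if p < l + n then 2 else 1

lemma tripartitePartAt_layout (v : Fin l ⊕ Fin m ⊕ Fin n) :
    tripartitePartAt l n (tripartiteLayout l m n v) = triPart v := by
  rcases v with i | j | i <;> simp [tripartiteLayout, tripartitePartAt, triPart]

variable {l m n}

lemma tripartitePartAt_eq_of_notMem_Ioo {a b p q : ℕ} (hl : l ∉ Set.Ioo a b)
    (hln : l + n ∉ Set.Ioo a b) (hp : p ∈ Set.Ico a b) (hq : q ∈ Set.Ico a b) :
    tripartitePartAt l n p = tripartitePartAt l n q := by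
  simp only [Set.mem_Ioo, Set.mem_Ico] at *
  unfold tripartitePartAt
  split_ifs <;> omega

/-- The middle part has at least two vertices, so a window of width `3` cannot meet both outer
parts. -/
lemma tripartitePartAt_not_rainbow (hn : 2 ≤ n) {a p q r : ℕ} (hp : p ∈ Set.Ico a (a + 3))
    (hq : q ∈ Set.Ico a (a + 3)) (hr : r ∈ Set.Ico a (a + 3))
    (hpq : tripartitePartAt l n p ≠ tripartitePartAt l n q)
    (hqr : tripartitePartAt l n q ≠ tripartitePartAt l n r) :
    tripartitePartAt l n p = tripartitePartAt l n r := by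
  simp only [Set.mem_Ico] at *
  unfold tripartitePartAt at *
  split_ifs at * <;> first | rfl | omega

lemma completeTripartiteGraph_adj_iff {u w : Fin l ⊕ Fin m ⊕ Fin n} :
    (completeTripartiteGraph l m n).Adj u w ↔
      tripartitePartAt l n (tripartiteLayout l m n u) ≠
        tripartitePartAt l n (tripartiteLayout l m n w) := by
  rw [tripartitePartAt_layout, tripartitePartAt_layout]
  rfl

theorem hasEquitableTreeColoring2_of_blockSizes (hn : 2 ≤ n) (L : List ℕ)
    (hsum : L.sum = l + m + n) (hk : ∃ k, ∀ x ∈ L, x = k ∨ x = k + 1)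
    (hcut : ∀ i (hi : i < L.length), 3 < L[i] → ∀ x ∈ ({l, l + n} : Finset ℕ),
      x ∉ Set.Ioo (L.take i).sum (L.take (i + 1)).sum) :
    HasEquitableTreeColoring2 (completeTripartiteGraph l m n) L.length := by
  obtain ⟨k, hk⟩ := hk
  have hL : L.sum = l + (n + m) := by omega
  let f := intervalColoring (tripartiteLayout l m n) L hL
  refine ⟨f, isTreeColoring2_of_forall_class f fun c => ?_,
    isEquitableColoring_intervalColoring _ L hL hk⟩
  have hmem (v) (hv : v ∈ f ⁻¹' {c}) := (mem_preimage_intervalColoring _ L hL).1 hv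
  by_cases hbig : 3 < L[(c : ℕ)]
  · left
    intro v hv w hw _ hvw
    exact completeTripartiteGraph_adj_iff.1 hvw <| tripartitePartAt_eq_of_notMem_Ioo
      (hcut c c.2 hbig l (by simp)) (hcut c c.2 hbig (l + n) (by simp)) (hmem v hv) (hmem w hw)
  · right
    refine ⟨by rw [ncard_preimage_intervalColoring]; omega, fun u hu v hv w hw huv hvw huw => ?_⟩
    have hwindow : (L.take (c + 1)).sum ≤ (L.take c).sum + 3 := by
      rw [List.sum_take_succ _ _ c.2]
      omega
    exact completeTripartiteGraph_adj_iff.1 huw <| tripartitePartAt_not_rainbow hn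
      (Set.Ico_subset_Ico_right hwindow (hmem u hu)) (Set.Ico_subset_Ico_right hwindow (hmem v hv))
      (Set.Ico_subset_Ico_right hwindow (hmem w hw))
      (completeTripartiteGraph_adj_iff.1 huv) (completeTripartiteGraph_adj_iff.1 hvw)

end Tripartite

theorem statement10_general (l m n b c : ℕ) (hlm : l ≤ m) (hmn : m ≤ n)
    (hb : 0 < b) (hc : c ≤ 2) (hsum : l + m + n = 4 * b + c) :
    ∀ t : ℕ, b + 1 ≤ t →
      HasEquitableTreeColoring2 (completeTripartiteGraph l m n) t := by
  intro t ht
  obtain ⟨L, rfl, hL, hk, hcut⟩ :=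
    exists_equitable_blockSizes {l, l + n} Finset.card_le_two (l + m + n) t (by omega) (by omega)
  exact hasEquitableTreeColoring2_of_blockSizes (by omega) L hL hk hcut

theorem statement10 (l m n b c : ℕ) (hl : 0 < l) (hlm : l ≤ m) (hmn : m ≤ n)
    (hb : 0 < b) (hc : c ≤ 2) (hsum : l + m + n = 4 * b + c) :
    ∀ t : ℕ, b + 1 ≤ t →
      HasEquitableTreeColoring2 (completeTripartiteGraph l m n) t :=
  statement10_general l m n b c hlm hmn hb hc hsum
end
end
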